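/- arXiv:2509.19114 — 2 statements merged into one kernel-verified Lean document; each statement's English description precedes it below -/
import Mathlib

section
/- For every positive integer n, (1+q)^2 times the sum over k from 1 to n of q^{k-1}·([k]_q)^2·([k-1]_q + [k+1]_q) equals (1+q)^2 · ([n+1]_q [n]_q / (1+q))^2, equivalently sum_{k=1}^n q^{k-1} ([k]_q)^2 ([k-1]_q + [k+1]_q)/(1+q) = (q-binomial(n+1,2))^2. -/
open Finset

/-- The field of rational functions in q over ℚ. -/
noncomputable def q : RatFunc ℚ := RatFunc.X

/-- The q-analogue [m]_q = 1 + q + ... + q^{m-1}. -/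
noncomputable def qa (m : ℕ) : RatFunc ℚ := ∑ j ∈ Finset.range m, q ^ j

/-!
With `B m = [m+1]_q [m]_q`, each summand is a difference of consecutive squares:
`(1 + q) q^(k-1) [k]_q² ([k-1]_q + [k+1]_q) = B k² - B (k-1)²`, because
`[k+1]_q² - [k-1]_q² = ([k+1]_q - [k-1]_q)([k+1]_q + [k-1]_q)` and `[k+1]_q - [k-1]_q = q^(k-1) (1 + q)`.
The sum telescopes to `B n² - B 0² = B n²`.
-/

section GeomSum

variable {R : Type*} [CommRing R] (x : R)

theorem geom_sum_add_two_sub (k : ℕ) :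
    ∑ i ∈ range (k + 2), x ^ i - ∑ i ∈ range k, x ^ i = x ^ k * (1 + x) := by
  rw [sum_range_succ, sum_range_succ]
  ring

theorem sq_geom_sum_mul_succ_sub_sq (k : ℕ) :
    ((∑ i ∈ range (k + 2), x ^ i) * ∑ i ∈ range (k + 1), x ^ i) ^ 2
        - ((∑ i ∈ range (k + 1), x ^ i) * ∑ i ∈ range k, x ^ i) ^ 2
      = (1 + x) * (x ^ k * (∑ i ∈ range (k + 1), x ^ i) ^ 2
          * (∑ i ∈ range k, x ^ i + ∑ i ∈ range (k + 2), x ^ i)) := by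
  linear_combination (∑ i ∈ range (k + 1), x ^ i) ^ 2
      * (∑ i ∈ range k, x ^ i + ∑ i ∈ range (k + 2), x ^ i) * geom_sum_add_two_sub x k

theorem one_add_mul_sum_q_cube (n : ℕ) :
    (1 + x) * ∑ k ∈ Icc 1 n, x ^ (k - 1) * (∑ i ∈ range k, x ^ i) ^ 2
        * (∑ i ∈ range (k - 1), x ^ i + ∑ i ∈ range (k + 1), x ^ i)
      = ((∑ i ∈ range (n + 1), x ^ i) * ∑ i ∈ range n, x ^ i) ^ 2 := by
  induction n with
  | zero => simp
  | succ m ih =>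
    rw [sum_Icc_succ_top (Nat.le_add_left 1 m), mul_add, ih, Nat.add_sub_cancel,
      ← sq_geom_sum_mul_succ_sub_sq]
    ring

end GeomSum

theorem sum_q_cube_div_one_add {K : Type*} [Field K] {x : K} (hx : 1 + x ≠ 0) (n : ℕ) :
    ∑ k ∈ Icc 1 n, x ^ (k - 1) * (∑ i ∈ range k, x ^ i) ^ 2
        * ((∑ i ∈ range (k - 1), x ^ i + ∑ i ∈ range (k + 1), x ^ i) / (1 + x))
      = ((∑ i ∈ range (n + 1), x ^ i) * (∑ i ∈ range n, x ^ i) / (1 + x)) ^ 2 := by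
  simp only [← mul_div_assoc, ← sum_div, div_pow]
  rw [div_eq_div_iff hx (pow_ne_zero 2 hx), ← one_add_mul_sum_q_cube]
  ring

theorem RatFunc.one_add_X_ne_zero {K : Type*} [Field K] : (1 + RatFunc.X : RatFunc K) ≠ 0 := by
  simpa [add_comm] using RatFunc.algebraMap_ne_zero (Polynomial.X_add_C_ne_zero (1 : K))

theorem garrett_hummel_q_analogue_general (n : ℕ) :
    (∑ k ∈ Finset.Icc 1 n,
        q ^ (k - 1) * (qa k) ^ 2 * ((qa (k - 1) + qa (k + 1)) / (1 + q)))
      = (qa (n + 1) * qa n / (1 + q)) ^ 2 :=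
  sum_q_cube_div_one_add RatFunc.one_add_X_ne_zero n

theorem garrett_hummel_q_analogue (n : ℕ) (hn : 0 < n) :
    (∑ k ∈ Finset.Icc 1 n,
        q ^ (k - 1) * (qa k) ^ 2 * ((qa (k - 1) + qa (k + 1)) / (1 + q)))
      = (qa (n + 1) * qa n / (1 + q)) ^ 2 :=
  garrett_hummel_q_analogue_general n
end

section
/- For every positive integer n, the sum over 4-tuples (a,b,c,d) with 1 ≤ a < b ≤ n+1 and 1 ≤ d ≤ c ≤ n of q^{(n-a)+(n+1-b)+(n-c)+(n-d)} equals the square of the q-binomial coefficient [n+1 choose 2]_q. -/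
/-!
The conditions on `(a, b)` and on `(c, d)` are independent, so the sum is the product of two
pair sums. Reflecting the coordinates (`i, j = n - ·`) turns each of them into the staircase sum
`∑_{0 ≤ i ≤ j < n} q^(i+j)`, and multiplying this by `1 + q` telescopes row by row to
`[n+1]_q [n]_q`.
-/

open Finset Polynomial

theorem sum_filter_product_product_product_mul {α β γ δ R : Type*} [CommSemiring R]
    (s : Finset α) (t : Finset β) (u : Finset γ) (v : Finset δ)
    (P : α → β → Prop) (Q : γ → δ → Prop) [∀ a b, Decidable (P a b)]
    [∀ c d, Decidable (Q c d)] (f : α → β → R) (g : γ → δ → R) :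
    ∑ p ∈ (s ×ˢ t ×ˢ u ×ˢ v).filter (fun p => P p.1 p.2.1 ∧ Q p.2.2.1 p.2.2.2),
        f p.1 p.2.1 * g p.2.2.1 p.2.2.2 =
      (∑ p ∈ (s ×ˢ t).filter (fun p => P p.1 p.2), f p.1 p.2) *
        ∑ p ∈ (u ×ˢ v).filter (fun p => Q p.1 p.2), g p.1 p.2 := by
  simp only [sum_filter, sum_mul_sum, ite_zero_mul_ite_zero, sum_product]
  exact sum_congr rfl fun _ _ => sum_comm

theorem sum_filter_lt_Icc_reflect {M : Type*} [AddCommMonoid M] (f : ℕ → ℕ → M) (n : ℕ) :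
    ∑ p ∈ (Icc 1 (n + 1) ×ˢ Icc 1 (n + 1)).filter (fun p => p.1 < p.2),
        f (n + 1 - p.2) (n - p.1) =
      ∑ j ∈ range n, ∑ i ∈ range (j + 1), f i j := by
  rw [sum_sigma']
  refine sum_nbij' (fun p => ⟨n - p.1, n + 1 - p.2⟩) (fun s => (n - s.1, n + 1 - s.2))
    ?_ ?_ ?_ ?_ (fun _ _ => rfl) <;>
  simp only [mem_filter, mem_product, mem_Icc, mem_sigma, mem_range, Prod.forall,
    Sigma.forall, Prod.mk.injEq, Sigma.mk.injEq, heq_eq_eq] <;> omega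

theorem sum_filter_le_Icc_reflect {M : Type*} [AddCommMonoid M] (f : ℕ → ℕ → M) (n : ℕ) :
    ∑ p ∈ (Icc 1 n ×ˢ Icc 1 n).filter (fun p => p.2 ≤ p.1), f (n - p.1) (n - p.2) =
      ∑ j ∈ range n, ∑ i ∈ range (j + 1), f i j := by
  rw [sum_sigma']
  refine sum_nbij' (fun p => ⟨n - p.2, n - p.1⟩) (fun s => (n - s.2, n - s.1))
    ?_ ?_ ?_ ?_ (fun _ _ => rfl) <;>
  simp only [mem_filter, mem_product, mem_Icc, mem_sigma, mem_range, Prod.forall,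
    Sigma.forall, Prod.mk.injEq, Sigma.mk.injEq, heq_eq_eq] <;> omega

theorem one_add_mul_sum_triangle_pow {R : Type*} [CommSemiring R] (x : R) (n : ℕ) :
    (1 + x) * ∑ j ∈ range n, ∑ i ∈ range (j + 1), x ^ (i + j) =
      (∑ i ∈ range (n + 1), x ^ i) * ∑ i ∈ range n, x ^ i := by
  induction n with
  | zero => simp
  | succ n ih =>
    have row : ∑ i ∈ range (n + 1), x ^ (i + n) = x ^ n * ∑ i ∈ range (n + 1), x ^ i := by
      simp only [pow_add, mul_sum, mul_comm]
    rw [sum_range_succ, mul_add, ih, row, sum_range_succ _ (n + 1), sum_range_succ _ n]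
    ring

theorem one_add_q_ne_zero : (1 + q : RatFunc ℚ) ≠ 0 := by
  have h : (1 + q : RatFunc ℚ) = algebraMap ℚ[X] (RatFunc ℚ) (X + C 1) := by
    rw [q, map_add, RatFunc.algebraMap_C, RatFunc.algebraMap_X, map_one, add_comm]
  rw [h]
  exact RatFunc.algebraMap_ne_zero (X_add_C_ne_zero 1)

theorem taxicab_qcount_duoprism_far_general (n : ℕ) :
    (∑ p ∈ (Finset.Icc 1 (n + 1) ×ˢ Finset.Icc 1 (n + 1) ×ˢ
              Finset.Icc 1 n ×ˢ Finset.Icc 1 n).filter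
        (fun p : ℕ × ℕ × ℕ × ℕ => p.1 < p.2.1 ∧ p.2.2.2 ≤ p.2.2.1),
        q ^ ((n - p.1) + (n + 1 - p.2.1) + (n - p.2.2.1) + (n - p.2.2.2)))
      = (qa (n + 1) * qa n / (1 + q)) ^ 2 := by
  have triangle :
      ∑ j ∈ range n, ∑ i ∈ range (j + 1), q ^ (i + j) = qa (n + 1) * qa n / (1 + q) := by
    rw [eq_div_iff one_add_q_ne_zero, mul_comm]
    exact one_add_mul_sum_triangle_pow q n
  have factor (p : ℕ × ℕ × ℕ × ℕ) :
      q ^ ((n - p.1) + (n + 1 - p.2.1) + (n - p.2.2.1) + (n - p.2.2.2)) =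
        q ^ ((n + 1 - p.2.1) + (n - p.1)) * q ^ ((n - p.2.2.1) + (n - p.2.2.2)) := by
    rw [← pow_add]
    ring_nf
  simp only [factor]
  rw [sum_filter_product_product_product_mul (P := fun a b => a < b) (Q := fun c d => d ≤ c)
      (f := fun a b => q ^ ((n + 1 - b) + (n - a))) (g := fun c d => q ^ ((n - c) + (n - d))),
    sum_filter_lt_Icc_reflect (fun i j => q ^ (i + j)),
    sum_filter_le_Icc_reflect (fun i j => q ^ (i + j)), triangle, sq]

theorem taxicab_qcount_duoprism_far (n : ℕ) (hn : 0 < n) :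
    (∑ p ∈ (Finset.Icc 1 (n + 1) ×ˢ Finset.Icc 1 (n + 1) ×ˢ
              Finset.Icc 1 n ×ˢ Finset.Icc 1 n).filter
        (fun p : ℕ × ℕ × ℕ × ℕ => p.1 < p.2.1 ∧ p.2.2.2 ≤ p.2.2.1),
        q ^ ((n - p.1) + (n + 1 - p.2.1) + (n - p.2.2.1) + (n - p.2.2.2)))
      = (qa (n + 1) * qa n / (1 + q)) ^ 2 :=
  taxicab_qcount_duoprism_far_general n
end
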